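/- In the coin-tossing game, let E be the event that p_1 > 0 implies x_1 = 1. Then Q̄(E) = 0: for every initial capital K_0 > 0, if Forecaster announces p_1 = K_0/2 and Skeptic announces M_1 = 2, then K_1 = 0 if x_1 = 0 and K_1 = 2 if x_1 = 1; hence no Reality strategy with K_0 > 0 can guarantee both E and sup_n K_n ≤ 1. Nevertheless, Reality can comply with E: the strategy x_1 = 1 if p_1 > 0 (else 0), and for n ≥ 2, x_n = 1 if M_n < 0 and x_n = 0 if M_n ≥ 0, guarantees E and sup_n K_n = max(K_0, K_1) < ∞. -/

import Mathlib

open Filter Finset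

/-- Capital process in the coin-tossing game with initial capital `a`. -/
def cap (a : ℝ) (p M x : ℕ → ℝ) : ℕ → ℝ
  | 0 => a
  | n + 1 => cap a p M x n + M n * (x n - p n)

/-- Forecaster's moves are probabilities in `[0,1]`. -/
def ValidP (p : ℕ → ℝ) : Prop := ∀ n, p n ∈ Set.Icc (0 : ℝ) 1

/-- Reality's moves are in `{0,1}`. -/
def ValidX (x : ℕ → ℝ) : Prop := ∀ n, x n = 0 ∨ x n = 1

/-- A Skeptic strategy reads Forecaster's moves up to round `n` and Reality's
moves before round `n`. -/
def SAdapted (S : (ℕ → ℝ) → (ℕ → ℝ) → ℕ → ℝ) : Prop :=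
  ∀ p p' x x' : ℕ → ℝ, ∀ n, (∀ k ≤ n, p k = p' k) → (∀ k < n, x k = x' k) →
    S p x n = S p' x' n

/-- A Reality strategy reads Forecaster's and Skeptic's moves up to round `n`. -/
def RAdapted (R : (ℕ → ℝ) → (ℕ → ℝ) → ℕ → ℝ) : Prop :=
  ∀ p p' M M' : ℕ → ℝ, ∀ n, (∀ k ≤ n, p k = p' k) → (∀ k ≤ n, M k = M' k) →
    R p M n = R p' M' n

/-- Upper probability of an event `E` (a set of paths `(p, x)`). -/
noncomputable def UpperP (E : (ℕ → ℝ) → (ℕ → ℝ) → Prop) : ℝ :=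
  sInf {a | ∃ S, SAdapted S ∧ ∀ p x, ValidP p → ValidX x →
    (∀ n, 0 ≤ cap a p (S p x) x n) ∧
    (E p x → ∀ ε : ℝ, 0 < ε → ∃ n, 1 - ε < cap a p (S p x) x n)}

/-- Lower probability. -/
noncomputable def LowerP (E : (ℕ → ℝ) → (ℕ → ℝ) → Prop) : ℝ :=
  1 - UpperP (fun p x => ¬ E p x)

/-- The set of initial capitals `a` for which some Reality strategy guarantees
the event and keeps the capital at most 1, against every Forecaster and every
Skeptic keeping the capital nonnegative. -/
def QSet (E : (ℕ → ℝ) → (ℕ → ℝ) → Prop) : Set ℝ :=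
  {a | ∃ R, RAdapted R ∧ ∀ p M : ℕ → ℝ, ValidP p →
    ValidX (R p M) ∧
    ((∀ n, 0 ≤ cap a p M (R p M) n) →
      (E p (R p M) ∧ ∀ n, cap a p M (R p M) n ≤ 1))}

noncomputable def UpperQ (E : (ℕ → ℝ) → (ℕ → ℝ) → Prop) : ℝ := sSup (QSet E)

noncomputable def LowerQ (E : (ℕ → ℝ) → (ℕ → ℝ) → Prop) : ℝ :=
  1 - UpperQ (fun p x => ¬ E p x)

/-!
Upper bound: with initial capital `a > 0`, Forecaster announces `p₀ = a/2` and Skeptic stakes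
`M₀ = 2` once, so that `K₁ = 2 x₀`. Either `x₀ = 0`, which violates the event while Skeptic
stays solvent, or `x₀ = 1`, which brings the capital to `2 > 1`.
Lower bound and compliance: if Reality always plays the outcome on which Skeptic's stake
does not win (`contrarian`), the capital never increases. From capital `0` this outcome
violates the event only when `M₀ > 0`, and then `K₁ = -M₀ p₀ < 0`.
-/

def PosForecastUp (p x : ℕ → ℝ) : Prop := 0 < p 0 → x 0 = 1

noncomputable def contrarian (m : ℝ) : ℝ := if m ≤ 0 then 1 else 0

lemma contrarian_eq_zero_or_eq_one (m : ℝ) : contrarian m = 0 ∨ contrarian m = 1 := by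
  unfold contrarian; split_ifs <;> simp

lemma mul_contrarian_sub_nonpos (m : ℝ) {q : ℝ} (hq : q ∈ Set.Icc (0 : ℝ) 1) :
    m * (contrarian m - q) ≤ 0 := by
  obtain ⟨hq0, hq1⟩ := hq
  unfold contrarian
  split_ifs <;> nlinarith

section Capital

variable {a : ℝ} {p M x : ℕ → ℝ} {m : ℕ}

lemma cap_le_of_contrarian (hp : ValidP p) (hx : ∀ n ≥ m, x n = contrarian (M n)) :
    ∀ n ≥ m, cap a p M x n ≤ cap a p M x m := by
  intro n hn
  induction n, hn using Nat.le_induction with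
  | base => exact le_rfl
  | succ n hmn ih =>
    calc cap a p M x (n + 1) = cap a p M x n + M n * (x n - p n) := rfl
      _ ≤ cap a p M x n := by
        rw [hx n hmn]; linarith [mul_contrarian_sub_nonpos (M n) (hp n)]
      _ ≤ cap a p M x m := ih

lemma cap_eq_of_forall_ge_eq_zero (hM : ∀ n ≥ m, M n = 0) :
    ∀ n ≥ m, cap a p M x n = cap a p M x m := by
  intro n hn
  induction n, hn using Nat.le_induction with
  | base => rfl
  | succ n hmn ih =>
    calc cap a p M x (n + 1) = cap a p M x n + M n * (x n - p n) := rfl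
      _ = cap a p M x m := by rw [hM n hmn, ih, zero_mul, add_zero]

lemma cap_one_of_bet_two (hp : p 0 = a / 2) (hM : M 0 = 2) : cap a p M x 1 = 2 * x 0 := by
  change a + M 0 * (x 0 - p 0) = 2 * x 0
  rw [hp, hM]; ring

end Capital

lemma le_one_of_mem_QSet {E : (ℕ → ℝ) → (ℕ → ℝ) → Prop} {a : ℝ} (ha : a ∈ QSet E)
    (ha0 : 0 ≤ a) : a ≤ 1 := by
  obtain ⟨R, -, hR⟩ := ha
  have hp : ValidP fun _ => 0 := fun _ => ⟨le_rfl, zero_le_one⟩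
  have hcap : ∀ n, cap a (fun _ => 0) 0 (R (fun _ => 0) 0) n = a := fun n =>
    cap_eq_of_forall_ge_eq_zero (fun _ _ => rfl) n n.zero_le
  have hsolvent := fun n => (hcap n).symm ▸ ha0
  simpa [hcap] using ((hR _ 0 hp).2 hsolvent).2 0

lemma nonpos_of_mem_QSet {a : ℝ} (ha : a ∈ QSet PosForecastUp) : a ≤ 0 := by
  by_contra! ha0
  have ha1 := le_one_of_mem_QSet ha ha0.le
  obtain ⟨R, -, hR⟩ := ha
  set p : ℕ → ℝ := fun _ => a / 2
  set M : ℕ → ℝ := Pi.single 0 2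
  have hp : ValidP p := fun _ => ⟨by positivity, show a / 2 ≤ 1 by linarith⟩
  obtain ⟨hx, himp⟩ := hR p M hp
  have hcap1 : cap a p M (R p M) 1 = 2 * R p M 0 := cap_one_of_bet_two rfl (Pi.single_eq_same 0 2)
  have hcap : ∀ n ≥ 1, cap a p M (R p M) n = 2 * R p M 0 := fun n hn =>
    hcap1 ▸ cap_eq_of_forall_ge_eq_zero (fun k hk => Pi.single_eq_of_ne (by omega) 2) n hn
  have hsolvent : ∀ n, 0 ≤ cap a p M (R p M) n := by
    rintro (_ | n)
    · exact ha0.le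
    · rw [hcap _ n.succ_pos]; rcases hx 0 with h | h <;> rw [h] <;> norm_num
  obtain ⟨hE, hbound⟩ := himp hsolvent
  have hx0 : R p M 0 = 1 := hE (by positivity)
  linarith [hbound 1]

lemma zero_mem_QSet : (0 : ℝ) ∈ QSet PosForecastUp := by
  refine ⟨fun _ M n => contrarian (M n), fun _ _ _ _ n _ hM => congrArg contrarian (hM n le_rfl),
    fun p M hp => ⟨fun n => contrarian_eq_zero_or_eq_one (M n), fun hsolvent => ⟨?_, fun n => ?_⟩⟩⟩
  · intro hp0
    by_contra hx0
    have hM0 : 0 < M 0 := by by_contra!; simp [contrarian, this] at hx0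
    have hcap1 : cap 0 p M (fun n => contrarian (M n)) 1 = -(M 0 * p 0) := by
      change 0 + M 0 * (contrarian (M 0) - p 0) = _
      simp [contrarian, hM0.not_ge]
    linarith [hsolvent 1, mul_pos hM0 hp0]
  · exact (cap_le_of_contrarian hp (fun _ _ => rfl) n n.zero_le).trans zero_le_one

lemma upperQ_posForecastUp : UpperQ PosForecastUp = 0 :=
  le_antisymm (csSup_le ⟨0, zero_mem_QSet⟩ fun _ => nonpos_of_mem_QSet)
    (le_csSup ⟨0, fun _ => nonpos_of_mem_QSet⟩ zero_mem_QSet)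

noncomputable def complyFirst (p M : ℕ → ℝ) (n : ℕ) : ℝ :=
  if n = 0 then (if 0 < p 0 then 1 else 0) else contrarian (M n)

lemma complyFirst_adapted : RAdapted complyFirst := by
  intro p p' M M' n hp hM
  simp only [complyFirst, hp 0 n.zero_le, hM n le_rfl]

lemma validX_complyFirst (p M : ℕ → ℝ) : ValidX (complyFirst p M) := by
  intro n
  unfold complyFirst
  split_ifs
  exacts [Or.inr rfl, Or.inl rfl, contrarian_eq_zero_or_eq_one _]

lemma cap_complyFirst_le {a : ℝ} {p : ℕ → ℝ} (M : ℕ → ℝ) (hp : ValidP p) (n : ℕ) :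
    cap a p M (complyFirst p M) n ≤ max a (cap a p M (complyFirst p M) 1) := by
  rcases n.eq_zero_or_pos with rfl | hn
  · exact le_max_left _ _
  · refine (cap_le_of_contrarian hp (fun k hk => ?_) n hn).trans (le_max_right _ _)
    simp [complyFirst, Nat.one_le_iff_ne_zero.mp hk]

/-- In the coin-tossing game, for the event `E` that `p 1 > 0 → x 1 = 1`:
`Q̄(E) = 0`; concretely, against `p 1 = K 0 / 2` and `M 1 = 2` the capital
after round 1 equals `2 * x 1` (so `0` if `x 1 = 0` and `2` if `x 1 = 1`).
Nevertheless Reality can comply with `E`: some adapted strategy guarantees `E`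
and a bounded capital whenever Skeptic keeps the capital nonnegative. -/
theorem stmt_18 :
    UpperQ (fun p x => 0 < p 0 → x 0 = 1) = 0 ∧
    (∀ a : ℝ, ∀ x : ℕ → ℝ,
      cap a (fun _ => a / 2) (fun _ => (2 : ℝ)) x 1 = 2 * x 0) ∧
    (∃ R, RAdapted R ∧ ∀ p M : ℕ → ℝ, ValidP p →
      ValidX (R p M) ∧
      ((∀ n, 0 ≤ cap 1 p M (R p M) n) →
        ((0 < p 0 → R p M 0 = 1) ∧
          ∃ C : ℝ, ∀ n, cap 1 p M (R p M) n ≤ C))) := by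
  refine ⟨upperQ_posForecastUp, fun a x => cap_one_of_bet_two rfl rfl, ?_⟩
  refine ⟨complyFirst, complyFirst_adapted, fun p M hp => ⟨validX_complyFirst p M, fun _ => ?_⟩⟩
  exact ⟨fun hp0 => by simp [complyFirst, hp0], _, cap_complyFirst_le M hp⟩
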